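/- For real t with |t| ≥ 2, the function ψ₁(t) = (∂/∂s) log γ(s,t)|_{s=1/2}, where γ(s,t) = π^{−s}Γ((s−it)/2)Γ((s+it)/2), satisfies ψ₁(t) = log√(1/4 + t²) − log(2π) + O(1/t²), with an absolute implied constant. -/

import Mathlib

open Complex

/-- `ψ₁(t) = ∂/∂s log γ(s,t) |_{s = 1/2}`, the logarithmic derivative at
`s = 1/2` of `γ(s,t) = π^{-s} Γ((s-it)/2) Γ((s+it)/2)`. -/
noncomputable def psiOne (t : ℝ) : ℂ :=
  logDeriv (fun s : ℂ =>
    (Real.pi : ℂ) ^ (-s) * Complex.Gamma ((s - Complex.I * t) / 2) *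
      Complex.Gamma ((s + Complex.I * t) / 2)) (1 / 2)

/-!
With `z± = (1/2 ± it)/2` the product rule gives `ψ₁(t) = -log π + (ψ(z₋) + ψ(z₊))/2`, where
`ψ = Γ'/Γ`, and `log z₋ + log z₊ = log ((1/4 + t²)/4)`; so it suffices to show
`ψ(z) = log z - 1/(2z) + O(1/t²)` at these two points.

Taking logarithms in Euler's limit `Γ(s) = lim n^s n! / (s (s+1) ⋯ (s+n))` gives a branch of
`log Γ` on `Re s > 0` as a series (the Weierstrass product), which may be differentiated termwise;
this yields Gauss's formula `ψ(z) = lim (log n - ∑_{k<n} 1/(z+k))`. By telescoping,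
`ψ(z) - log z + 1/(2z) = ∑_k e(1/(z+k))` with `e(w) = log(1+w) - w + w/2 - w/(2(1+w)) = O(|w|³)`,
and `∑_k |z+k|⁻³ = O(1/t²)` because `|z+k| ≥ (k+|t|/2)/2`.
-/

open Filter Finset Topology

lemma summable_inv_natCast_add_one_sq : Summable (fun k : ℕ => 1 / ((k : ℝ) + 1) ^ 2) := by
  exact_mod_cast (summable_nat_add_iff 1).2 (Real.summable_one_div_nat_pow.2 one_lt_two)

lemma sum_range_inv_add_pow_three_le {a : ℝ} (ha : 1 ≤ a) (n : ℕ) :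
    ∑ k ∈ range n, ((k + a) ^ 3)⁻¹ ≤ 2 / a ^ 2 := by
  -- `x⁻³ ≤ h (x - 1/2) - h (x + 1/2)` for `h y = (2 y²)⁻¹` and `x ≥ 1`
  set g : ℕ → ℝ := fun k => (2 * (k + a - 1 / 2) ^ 2)⁻¹
  have hstep : ∀ k : ℕ, ((k + a) ^ 3)⁻¹ ≤ g k - g (k + 1) := by
    intro k
    have hx : 1 ≤ (k : ℝ) + a := by linarith [(k.cast_nonneg : (0:ℝ) ≤ k)]
    simp only [g, Nat.cast_succ]
    rw [inv_sub_inv (by nlinarith) (by nlinarith), inv_eq_one_div,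
      div_le_div_iff₀ (by positivity) (by nlinarith)]
    nlinarith [pow_pos (by linarith : (0:ℝ) < k + a) 3]
  calc ∑ k ∈ range n, ((k + a) ^ 3)⁻¹ ≤ ∑ k ∈ range n, (g k - g (k + 1)) :=
        sum_le_sum fun k _ => hstep k
    _ = g 0 - g n := sum_range_sub' g n
    _ ≤ g 0 := sub_le_self _ (by positivity)
    _ ≤ 2 / a ^ 2 := by
      simp only [g, Nat.cast_zero, zero_add]
      rw [inv_eq_one_div, div_le_div_iff₀ (by nlinarith) (by positivity)]
      nlinarith

namespace Complex

local notation "γ" => Real.eulerMascheroniConstant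

noncomputable def logGammaTerm (s : ℂ) (k : ℕ) : ℂ := s / (k + 1) - log (1 + s / (k + 1))

noncomputable def digammaTerm (s : ℂ) (k : ℕ) : ℂ := (k + 1 : ℂ)⁻¹ - (s + (k + 1))⁻¹

lemma hasDerivAt_logGammaTerm {s : ℂ} (hs : -1 < s.re) (k : ℕ) :
    HasDerivAt (logGammaTerm · k) (digammaTerm s k) s := by
  have hk : (k + 1 : ℂ) ≠ 0 := Nat.cast_add_one_ne_zero k
  have hslit : 1 + s / (k + 1) ∈ slitPlane := by
    refine mem_slitPlane_iff.2 (Or.inl ?_)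
    rw [add_re, one_re, show (s / (k + 1)).re = s.re / (k + 1) by
      exact_mod_cast div_natCast_re s (k + 1)]
    have : -1 < s.re / (k + 1) := by
      rw [lt_div_iff₀ (by positivity)]; nlinarith [(k.cast_nonneg : (0:ℝ) ≤ k)]
    linarith
  have hlin : HasDerivAt (fun s : ℂ => s / (k + 1)) (k + 1 : ℂ)⁻¹ s := by
    simpa [div_eq_mul_inv] using (hasDerivAt_id s).div_const (k + 1 : ℂ)
  refine (hlin.sub ((hlin.const_add 1).clog hslit)).congr_deriv ?_
  have : 1 + s / (k + 1) ≠ 0 := slitPlane_ne_zero hslit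
  unfold digammaTerm
  field_simp
  ring

lemma norm_digammaTerm_le {s : ℂ} (hs : -1 / 2 < s.re) (k : ℕ) :
    ‖digammaTerm s k‖ ≤ 2 * ‖s‖ / (k + 1) ^ 2 := by
  have hk : (0 : ℝ) < k + 1 := by positivity
  have hsk : (k + 1 : ℝ) / 2 ≤ ‖s + (k + 1)‖ := by
    refine le_trans ?_ (re_le_norm _)
    simp only [add_re, natCast_re, one_re]
    linarith [(k.cast_nonneg : (0:ℝ) ≤ k)]
  have hsk0 : s + (k + 1) ≠ 0 := norm_pos_iff.mp (by linarith)
  have : digammaTerm s k = s / ((k + 1) * (s + (k + 1))) := by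
    unfold digammaTerm
    field_simp
    ring
  have hnk : ‖(k + 1 : ℂ)‖ = k + 1 := by exact_mod_cast norm_natCast (k + 1)
  rw [this, norm_div, norm_mul, hnk, div_le_div_iff₀ (by nlinarith) (by positivity)]
  nlinarith [mul_le_mul_of_nonneg_left hsk (by positivity : (0:ℝ) ≤ ‖s‖ * (k + 1))]

lemma summable_digammaTerm {s : ℂ} (hs : -1 / 2 < s.re) : Summable (digammaTerm s) :=
  .of_norm_bounded (summable_inv_natCast_add_one_sq.mul_left (2 * ‖s‖)) fun k => by
    rw [mul_one_div]; exact norm_digammaTerm_le hs k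

lemma summable_logGammaTerm_and_hasDerivAt_tsum {s : ℂ} (hs : -1 / 2 < s.re) :
    Summable (logGammaTerm s) ∧
      HasDerivAt (fun z => ∑' k, logGammaTerm z k) (∑' k, digammaTerm s k) s := by
  set U : Set ℂ := {z : ℂ | -1 / 2 < z.re} ∩ Metric.ball 0 (‖s‖ + 1)
  have hU : IsOpen U := (isOpen_lt continuous_const continuous_re).inter Metric.isOpen_ball
  have hUc : IsPreconnected U :=
    ((convex_halfSpace_re_gt _).inter (convex_ball _ _)).isPreconnected
  have h0 : (0 : ℂ) ∈ U := ⟨by norm_num, by rw [Metric.mem_ball, dist_self]; positivity⟩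
  have hsU : s ∈ U := ⟨hs, by rw [Metric.mem_ball, dist_zero_right]; linarith⟩
  have hderiv : ∀ k z, z ∈ U → HasDerivAt (logGammaTerm · k) (digammaTerm z k) z :=
    fun k z hz => hasDerivAt_logGammaTerm (by linarith [hz.1.out]) k
  have hbound :
      ∀ k z, z ∈ U → ‖digammaTerm z k‖ ≤ 2 * (‖s‖ + 1) * (1 / ((k : ℝ) + 1) ^ 2) := by
    intro k z hz
    have hz' : ‖z‖ < ‖s‖ + 1 := by simpa using hz.2.out
    calc ‖digammaTerm z k‖ ≤ 2 * ‖z‖ / (k + 1) ^ 2 := norm_digammaTerm_le hz.1 k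
      _ ≤ 2 * (‖s‖ + 1) * (1 / ((k : ℝ) + 1) ^ 2) := by
        rw [mul_one_div]; gcongr
  have hsum := summable_inv_natCast_add_one_sq.mul_left (2 * (‖s‖ + 1))
  -- every term vanishes at `0 ∈ U`, so termwise differentiation also yields summability on `U`
  have hsum0 : Summable (logGammaTerm 0) := by
    convert summable_zero with k
    simp [logGammaTerm]
  exact ⟨summable_of_summable_hasDerivAt_of_isPreconnected (g := fun k z => logGammaTerm z k)
      hsum hU hUc hderiv hbound h0 hsum0 hsU,
    hasDerivAt_tsum_of_isPreconnected (g := fun k z => logGammaTerm z k)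
      hsum hU hUc hderiv hbound h0 hsum0 hsU⟩

noncomputable def logGammaSeq (s : ℂ) (n : ℕ) : ℂ :=
  s * log n - log s - ∑ k ∈ range n, log (1 + s / (k + 1))

lemma exp_logGammaSeq {s : ℂ} (hs : 0 < s.re) {n : ℕ} (hn : n ≠ 0) :
    exp (logGammaSeq s n) = GammaSeq s n := by
  have hs0 : s ≠ 0 := fun h => by simp [h] at hs
  have hsk : ∀ k : ℕ, s + (k + 1) ≠ 0 := fun k h => by
    have := congrArg re h
    simp only [add_re, natCast_re, one_re, zero_re] at this
    linarith [(k.cast_nonneg : (0:ℝ) ≤ k)]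
  have hterm : ∀ k : ℕ, 1 + s / (k + 1) = (s + (k + 1)) / (k + 1) := fun k => by
    field_simp [Nat.cast_add_one_ne_zero k]; ring
  have hfact : (n.factorial : ℂ) = ∏ k ∈ range n, ((k : ℂ) + 1) := by
    rw [← prod_range_add_one_eq_factorial]; push_cast; rfl
  have hprod : ∏ k ∈ range n, ((k : ℂ) + 1) ≠ 0 :=
    prod_ne_zero_iff.2 fun k _ => Nat.cast_add_one_ne_zero k
  rw [logGammaSeq, exp_sub, exp_sub, exp_log hs0, exp_sum, mul_comm,
    ← cpow_def_of_ne_zero (Nat.cast_ne_zero.2 hn), GammaSeq, prod_range_succ', hfact]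
  simp_rw [hterm, exp_log (div_ne_zero (hsk _) (Nat.cast_add_one_ne_zero _))]
  push_cast
  rw [prod_div_distrib, add_zero]
  have := prod_ne_zero_iff.2 fun k (_ : k ∈ range n) => hsk k
  field_simp

-- A branch of `log Γ` on `Re s > 0`, from the Weierstrass product
-- `1 / Γ(s) = s e^{γ s} ∏ₖ (1 + s/(k+1)) e^{-s/(k+1)}`.
noncomputable def logGammaSeries (s : ℂ) : ℂ := -γ * s - log s + ∑' k, logGammaTerm s k

lemma tendsto_log_sub_harmonic :
    Tendsto (fun n : ℕ => log n - harmonic n) atTop (𝓝 (-γ : ℂ)) := by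
  have h := (continuous_ofReal.tendsto _).comp Real.tendsto_harmonic_sub_log.neg
  rw [ofReal_neg] at h
  refine h.congr fun n => ?_
  simp [natCast_log]

lemma tendsto_logGammaSeq {s : ℂ} (hs : -1 / 2 < s.re) :
    Tendsto (logGammaSeq s) atTop (𝓝 (logGammaSeries s)) := by
  have hsum := (summable_logGammaTerm_and_hasDerivAt_tsum hs).1.hasSum.tendsto_sum_nat
  refine (((tendsto_log_sub_harmonic.mul_const s).sub_const (log s)).add hsum).congr fun n => ?_
  simp only [logGammaSeq, logGammaTerm, sum_sub_distrib, harmonic]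
  push_cast
  rw [sub_mul, sum_mul]
  simp_rw [inv_mul_eq_div]
  ring

lemma exp_logGammaSeries {s : ℂ} (hs : 0 < s.re) : exp (logGammaSeries s) = Gamma s := by
  refine tendsto_nhds_unique ((continuous_exp.tendsto _).comp (tendsto_logGammaSeq (by linarith)))
    ((GammaSeq_tendsto_Gamma s).congr' ?_)
  filter_upwards [eventually_ne_atTop 0] with n hn using (exp_logGammaSeq hs hn).symm

lemma hasDerivAt_logGammaSeries {s : ℂ} (hs : 0 < s.re) :
    HasDerivAt logGammaSeries (-γ - s⁻¹ + ∑' k, digammaTerm s k) s := by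
  have hlin := (hasDerivAt_id s).const_mul (-γ : ℂ)
  rw [mul_one] at hlin
  exact (hlin.sub (hasDerivAt_log (mem_slitPlane_iff.2 (Or.inl hs)))).add
    (summable_logGammaTerm_and_hasDerivAt_tsum (by linarith)).2

theorem digamma_eq_tsum {s : ℂ} (hs : 0 < s.re) :
    digamma s = -γ - s⁻¹ + ∑' k, digammaTerm s k := by
  have hGamma : Gamma =ᶠ[𝓝 s] fun z => exp (logGammaSeries z) := by
    filter_upwards [(isOpen_lt continuous_const continuous_re).mem_nhds hs] with z hz
    exact (exp_logGammaSeries hz).symm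
  rw [digamma_def, (logDeriv_congr_nhds hGamma).eq_of_nhds, logDeriv_apply,
    (hasDerivAt_logGammaSeries hs).cexp.deriv, mul_div_cancel_left₀ _ (exp_ne_zero _)]

lemma tendsto_inv_add_natCast (s : ℂ) : Tendsto (fun n : ℕ => (s + n)⁻¹) atTop (𝓝 0) :=
  tendsto_inv₀_cobounded.comp <|
    (tendsto_const_add_cobounded s).comp tendsto_natCast_atTop_cobounded

lemma tendsto_log_add_natCast_sub_log (s : ℂ) :
    Tendsto (fun n : ℕ => log (s + n) - log n) atTop (𝓝 0) := by
  have h1 : Tendsto (fun n : ℕ => 1 + s * (n : ℂ)⁻¹) atTop (𝓝 1) := by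
    simpa using ((tendsto_inv_add_natCast 0).const_mul s).const_add 1
  have h2 := (continuousAt_clog one_mem_slitPlane).tendsto.comp h1
  rw [log_one] at h2
  refine h2.congr' ?_
  filter_upwards [h1.eventually_ne one_ne_zero, eventually_ne_atTop 0] with n hn hn0
  have hn0' : (0 : ℝ) < n := by positivity
  have : s + n = ((n : ℝ) : ℂ) * (1 + s * (n : ℂ)⁻¹) := by
    push_cast; field_simp; ring
  rw [Function.comp_apply, this, log_ofReal_mul hn0' hn, natCast_log]
  ring

theorem tendsto_log_sub_sum_inv_digamma {s : ℂ} (hs : 0 < s.re) :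
    Tendsto (fun n : ℕ => log n - ∑ k ∈ range n, (s + k)⁻¹) atTop (𝓝 (digamma s)) := by
  have hpartial := (summable_digammaTerm (s := s) (by linarith)).hasSum.tendsto_sum_nat.const_add
    (-γ - s⁻¹ : ℂ)
  have hlim := (hpartial.add (tendsto_log_sub_harmonic.const_add (γ : ℂ))).add
    (tendsto_inv_add_natCast s)
  rw [← digamma_eq_tsum hs, add_neg_cancel, add_zero, add_zero] at hlim
  refine hlim.congr fun n => ?_
  have hshift := sum_range_succ' (fun k : ℕ => (s + k)⁻¹) n
  rw [sum_range_succ] at hshift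
  simp only [digammaTerm, sum_sub_distrib, harmonic]
  push_cast at hshift ⊢
  linear_combination hshift

lemma hasDerivAt_Gamma_of_re_pos {w : ℂ} (hw : 0 < w.re) :
    HasDerivAt Gamma (Gamma w * digamma w) w := by
  have hpole : ∀ m : ℕ, w ≠ -m := fun m h => by
    rw [h, neg_re, natCast_re] at hw
    linarith [(m.cast_nonneg : (0:ℝ) ≤ m)]
  rw [digamma_def, logDeriv_apply, mul_div_cancel₀ _ (Gamma_ne_zero_of_re_pos hw)]
  exact (differentiableAt_Gamma w hpole).hasDerivAt

lemma log_add_log_of_re_pos {x y : ℂ} (hx : 0 < x.re) (hy : 0 < y.re) :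
    log x + log y = log (x * y) := by
  have harg : ∀ {w : ℂ}, 0 < w.re → w.arg ∈ Set.Ioo (-(Real.pi / 2)) (Real.pi / 2) :=
    fun hw => abs_lt.1 (abs_arg_lt_pi_div_two_iff.2 (Or.inl hw))
  obtain ⟨h1, h2⟩ := harg hx
  obtain ⟨h3, h4⟩ := harg hy
  refine (log_mul (fun h => by simp [h] at hx) (fun h => by simp [h] at hy) ⟨?_, ?_⟩).symm <;>
    linarith [Real.pi_pos]

noncomputable def digammaRemainder (z : ℂ) : ℂ := digamma z - log z + (2 * z)⁻¹

-- `(log (z + 1) - log z) - z⁻¹ + ((2 z)⁻¹ - (2 (z + 1))⁻¹)`: both brackets telescope along `z + ℕ`.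
noncomputable def stirlingTerm (z : ℂ) : ℂ :=
  log (1 + z⁻¹) - z⁻¹ + (2 * z)⁻¹ - (2 * (z + 1))⁻¹

lemma log_one_add_inv {z : ℂ} (hz : 0 < z.re) : log (1 + z⁻¹) = log (z + 1) - log z := by
  have hz0 : z ≠ 0 := fun h => by simp [h] at hz
  have hw : 0 < (1 + z⁻¹).re := by
    rw [add_re, one_re, inv_re]
    linarith [div_nonneg hz.le (normSq_nonneg z)]
  rw [show z + 1 = z * (1 + z⁻¹) by field_simp, ← log_add_log_of_re_pos hz hw]
  ring

lemma sum_range_stirlingTerm {z : ℂ} (hz : 0 < z.re) (n : ℕ) :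
    ∑ k ∈ range n, stirlingTerm (z + k) =
      log (z + n) - log z - ∑ k ∈ range n, (z + k)⁻¹ + (2 * z)⁻¹ - (2 * (z + n))⁻¹ := by
  induction n with
  | zero => simp
  | succ n ih =>
    have hzn : 0 < (z + n).re := by simp only [add_re, natCast_re]; positivity
    rw [sum_range_succ, ih, stirlingTerm, log_one_add_inv hzn, sum_range_succ, Nat.cast_succ,
      ← add_assoc]
    ring

theorem hasSum_stirlingTerm {z : ℂ} (hz : 0 < z.re)
    (hsum : Summable fun k : ℕ => stirlingTerm (z + k)) :
    HasSum (fun k : ℕ => stirlingTerm (z + k)) (digammaRemainder z) := by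
  have hlim := ((((tendsto_log_add_natCast_sub_log z).add
    (tendsto_log_sub_sum_inv_digamma hz)).sub_const (log z)).add_const (2 * z)⁻¹).sub
    ((tendsto_inv_add_natCast z).const_mul 2⁻¹)
  rw [zero_add, mul_zero, sub_zero] at hlim
  rw [digammaRemainder, ← tendsto_nhds_unique hsum.hasSum.tendsto_sum_nat (hlim.congr fun n => ?_)]
  · exact hsum.hasSum
  · simp only [sum_range_stirlingTerm hz, mul_inv]
    ring

lemma stirlingTerm_eq {z : ℂ} (hz : z ≠ 0) (hz1 : 1 + z⁻¹ ≠ 0) :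
    stirlingTerm z = (log (1 + z⁻¹) - logTaylor 3 z⁻¹) - z⁻¹ ^ 3 / (2 * (1 + z⁻¹)) := by
  have hz1' : z + 1 ≠ 0 := fun h =>
    hz1 (by rw [← mul_right_inj' hz]; field_simp; linear_combination h)
  simp only [stirlingTerm, logTaylor, sum_range_succ, sum_range_zero]
  field_simp
  ring

lemma norm_stirlingTerm_le {z : ℂ} (hz : 1 < ‖z‖) :
    ‖stirlingTerm z‖ ≤ (‖z‖ ^ 2 * (‖z‖ - 1))⁻¹ := by
  have hz0 : z ≠ 0 := norm_pos_iff.1 (by linarith)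
  have hw : ‖z⁻¹‖ < 1 := by rw [norm_inv]; exact inv_lt_one_of_one_lt₀ hz
  have h1w : 1 - ‖z⁻¹‖ ≤ ‖1 + z⁻¹‖ := by
    simpa using norm_sub_norm_le (1 : ℂ) (-z⁻¹)
  have hlog : ‖log (1 + z⁻¹) - logTaylor 3 z⁻¹‖ ≤ ‖z⁻¹‖ ^ 3 * (1 - ‖z⁻¹‖)⁻¹ / 3 := by
    convert norm_log_sub_logTaylor_le 2 hw using 1
    norm_num
  have hcube : ‖z⁻¹ ^ 3 / (2 * (1 + z⁻¹))‖ ≤ ‖z⁻¹‖ ^ 3 * (1 - ‖z⁻¹‖)⁻¹ / 2 := by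
    rw [norm_div, norm_mul, norm_pow, Complex.norm_two, ← div_eq_mul_inv, div_div,
      mul_comm (1 - _)]
    gcongr
  rw [stirlingTerm_eq hz0 (norm_pos_iff.1 (by linarith))]
  calc _ ≤ ‖log (1 + z⁻¹) - logTaylor 3 z⁻¹‖ + ‖z⁻¹ ^ 3 / (2 * (1 + z⁻¹))‖ := norm_sub_le _ _
    _ ≤ ‖z⁻¹‖ ^ 3 * (1 - ‖z⁻¹‖)⁻¹ := by
      linarith [mul_nonneg (pow_nonneg (norm_nonneg z⁻¹) 3) (inv_nonneg.2 (sub_nonneg.2 hw.le))]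
    _ = (‖z‖ ^ 2 * (‖z‖ - 1))⁻¹ := by
      rw [norm_inv]
      field_simp

lemma norm_stirlingTerm_add_natCast_le {z : ℂ} (hre : 1 / 4 ≤ z.re) (him : 1 ≤ |z.im|) (k : ℕ) :
    ‖stirlingTerm (z + k)‖ ≤ 272 * ((k + |z.im|) ^ 3)⁻¹ := by
  have hre' : k + 1 / 4 ≤ ‖z + k‖ := by
    refine le_trans ?_ (re_le_norm _)
    simp only [add_re, natCast_re]
    linarith
  have him' : |z.im| ≤ ‖z + k‖ := by
    simpa using abs_im_le_norm (z + k)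
  have hsq : (1 / 4) ^ 2 + 1 ≤ ‖z + k‖ ^ 2 := by
    rw [Complex.sq_norm, normSq_apply]
    simp only [add_re, natCast_re, add_im, natCast_im, add_zero]
    nlinarith [sq_abs z.im, (k.cast_nonneg : (0:ℝ) ≤ k)]
  -- `(34/33)² < 17/16`, so that `‖z + k‖ - 1 ≥ ‖z + k‖ / 34`
  have hbig : 34 / 33 ≤ ‖z + k‖ := by nlinarith [norm_nonneg (z + k)]
  have hk : (k + |z.im|) / 2 ≤ ‖z + k‖ := by linarith
  calc ‖stirlingTerm (z + k)‖ ≤ (‖z + k‖ ^ 2 * (‖z + k‖ - 1))⁻¹ :=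
        norm_stirlingTerm_le (by linarith)
    _ ≤ 34 * (‖z + k‖ ^ 3)⁻¹ := by
      rw [← div_eq_mul_inv, inv_eq_one_div, div_le_div_iff₀ (by nlinarith) (by positivity)]
      nlinarith [pow_pos (by linarith : (0:ℝ) < ‖z + k‖) 2]
    _ ≤ 34 * (((k + |z.im|) / 2) ^ 3)⁻¹ := by gcongr
    _ = 272 * ((k + |z.im|) ^ 3)⁻¹ := by rw [div_pow, inv_div, div_eq_mul_inv]; ring

theorem norm_digammaRemainder_le {z : ℂ} (hre : 1 / 4 ≤ z.re) (him : 1 ≤ |z.im|) :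
    ‖digammaRemainder z‖ ≤ 544 / z.im ^ 2 := by
  have hpos : ∀ k : ℕ, 0 ≤ ((k + |z.im|) ^ 3)⁻¹ := fun k => by positivity
  have hsum := (summable_of_sum_range_le hpos (sum_range_inv_add_pow_three_le him)).mul_left 272
  have hbound := norm_stirlingTerm_add_natCast_le hre him
  rw [← (hasSum_stirlingTerm (by linarith) (.of_norm_bounded hsum hbound)).tsum_eq]
  calc _ ≤ ∑' k : ℕ, 272 * ((k + |z.im|) ^ 3)⁻¹ := tsum_of_norm_bounded hsum.hasSum hbound
    _ = 272 * ∑' k : ℕ, ((k + |z.im|) ^ 3)⁻¹ := tsum_mul_left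
    _ ≤ 272 * (2 / |z.im| ^ 2) := by
      gcongr
      exact Real.tsum_le_of_sum_range_le hpos (sum_range_inv_add_pow_three_le him)
    _ = 544 / z.im ^ 2 := by rw [sq_abs]; ring

lemma norm_digammaRemainder_quarter_add_le {t : ℝ} (ht : 2 ≤ |t|) :
    ‖digammaRemainder ((1 / 2 + I * t) / 2)‖ ≤ 2176 / t ^ 2 := by
  have him : 1 ≤ |((1 / 2 + I * t) / 2 : ℂ).im| := by
    simp only [div_ofNat_im, add_im, mul_im, I_re, I_im, ofReal_re, ofReal_im]
    norm_num [abs_div]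
    linarith
  refine (norm_digammaRemainder_le (by simp; norm_num) him).trans_eq ?_
  simp
  field_simp
  ring

end Complex

lemma psiOne_eq_digamma (t : ℝ) :
    psiOne t = -Real.log Real.pi +
      (digamma ((1 / 2 - I * t) / 2) + digamma ((1 / 2 + I * t) / 2)) / 2 := by
  have hre₁ : 0 < ((1 / 2 - I * t) / 2 : ℂ).re := by simp
  have hre₂ : 0 < ((1 / 2 + I * t) / 2 : ℂ).re := by simp
  have hπ : (Real.pi : ℂ) ≠ 0 := ofReal_ne_zero.2 Real.pi_ne_zero
  have hd₁ : HasDerivAt (fun s : ℂ => (s - I * t) / 2) (1 / 2) (1 / 2) := by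
    simpa using ((hasDerivAt_id (1 / 2 : ℂ)).sub_const (I * t)).div_const 2
  have hd₂ : HasDerivAt (fun s : ℂ => (s + I * t) / 2) (1 / 2) (1 / 2) := by
    simpa using ((hasDerivAt_id (1 / 2 : ℂ)).add_const (I * t)).div_const 2
  have hderiv : HasDerivAt (fun s : ℂ => (Real.pi : ℂ) ^ (-s) * Gamma ((s - I * t) / 2) *
      Gamma ((s + I * t) / 2)) _ (1 / 2) :=
    (((hasDerivAt_neg (1 / 2 : ℂ)).const_cpow (c := (Real.pi : ℂ)) (Or.inl hπ)).mul
      ((hasDerivAt_Gamma_of_re_pos hre₁).comp (h := fun s => (s - I * t) / 2) _ hd₁)).mul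
      ((hasDerivAt_Gamma_of_re_pos hre₂).comp (h := fun s => (s + I * t) / 2) _ hd₂)
  have hG₁ := Gamma_ne_zero_of_re_pos hre₁
  have hG₂ := Gamma_ne_zero_of_re_pos hre₂
  have hpow : (Real.pi : ℂ) ^ (-(1 / 2 : ℂ)) ≠ 0 :=
    (cpow_ne_zero_iff_of_exponent_ne_zero (by norm_num)).2 hπ
  rw [psiOne, logDeriv_apply, hderiv.deriv, ← ofReal_log Real.pi_pos.le]
  simp only [Function.comp_apply, Pi.mul_apply]
  rw [div_eq_iff (mul_ne_zero (mul_ne_zero hpow hG₁) hG₂)]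
  ring

lemma psiOne_sub_eq (t : ℝ) :
    psiOne t - ((Real.log (Real.sqrt (1 / 4 + t ^ 2)) : ℂ) - (Real.log (2 * Real.pi) : ℂ)) =
      (digammaRemainder ((1 / 2 - I * t) / 2) + digammaRemainder ((1 / 2 + I * t) / 2)) / 2 -
        ((2 / (1 + 4 * t ^ 2) : ℝ) : ℂ) := by
  have hre₁ : 0 < ((1 / 2 - I * t) / 2 : ℂ).re := by simp
  have hre₂ : 0 < ((1 / 2 + I * t) / 2 : ℂ).re := by simp
  have hreal : Real.log ((1 / 4 + t ^ 2) / 4) =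
      2 * (Real.log (Real.sqrt (1 / 4 + t ^ 2)) - Real.log 2) := by
    rw [Real.log_div (by positivity) (by norm_num), Real.log_sqrt (by positivity),
      show (4 : ℝ) = 2 ^ 2 by norm_num, Real.log_pow]
    push_cast
    ring
  have hlog : log ((1 / 2 - I * t) / 2) + log ((1 / 2 + I * t) / 2) =
      2 * ((Real.log (Real.sqrt (1 / 4 + t ^ 2)) : ℂ) - (Real.log 2 : ℂ)) := by
    have hprod :
        (1 / 2 - I * t) / 2 * ((1 / 2 + I * t) / 2) = (((1 / 4 + t ^ 2) / 4 : ℝ) : ℂ) := by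
      push_cast; ring_nf; simp; ring
    rw [log_add_log_of_re_pos hre₁ hre₂, hprod, ← ofReal_log (by positivity), hreal]
    push_cast
    ring
  have hinv :
      (2 * ((1 / 2 - I * t) / 2))⁻¹ + (2 * ((1 / 2 + I * t) / 2))⁻¹ = 4 / (1 + 4 * t ^ 2) := by
    have h₁ : (1 / 2 - I * t : ℂ) ≠ 0 := fun h => by simpa using congrArg re h
    have h₂ : (1 / 2 + I * t : ℂ) ≠ 0 := fun h => by simpa using congrArg re h
    have h₃ : (1 + 4 * t ^ 2 : ℂ) ≠ 0 := by
      exact_mod_cast (by positivity : (1 + 4 * t ^ 2 : ℝ) ≠ 0)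
    have hprod : (1 / 2 - I * t) * (1 / 2 + I * t) = (1 + 4 * t ^ 2 : ℂ) / 4 := by
      ring_nf; rw [I_sq]; ring
    rw [mul_div_cancel₀ _ two_ne_zero, mul_div_cancel₀ _ two_ne_zero, inv_add_inv h₁ h₂, hprod]
    field_simp
    ring
  rw [psiOne_eq_digamma, Real.log_mul two_ne_zero Real.pi_ne_zero]
  simp only [digammaRemainder]
  push_cast
  linear_combination (1 / 2 : ℂ) * hlog - (1 / 2 : ℂ) * hinv

/-- For `|t| ≥ 2`, `ψ₁(t) = log √(1/4 + t²) - log 2π + O(1/t²)` with an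
absolute implied constant. -/
theorem psiOne_asymptotic :
    ∃ C : ℝ, ∀ t : ℝ, 2 ≤ |t| →
      ‖psiOne t - ((Real.log (Real.sqrt (1 / 4 + t ^ 2)) : ℂ) -
          (Real.log (2 * Real.pi) : ℂ))‖ ≤ C / t ^ 2 := by
  refine ⟨2177, fun t ht => ?_⟩
  have h₁ := norm_digammaRemainder_quarter_add_le (t := -t) (by rwa [abs_neg])
  rw [ofReal_neg, mul_neg, ← sub_eq_add_neg, neg_sq] at h₁
  have h₂ := norm_digammaRemainder_quarter_add_le ht
  have hsmall : 2 / (1 + 4 * t ^ 2) ≤ 1 / t ^ 2 := by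
    rw [div_le_div_iff₀ (by positivity) (by nlinarith [sq_abs t])]
    nlinarith
  rw [psiOne_sub_eq]
  calc
    _ ≤ (‖digammaRemainder ((1 / 2 - I * t) / 2)‖ + ‖digammaRemainder ((1 / 2 + I * t) / 2)‖) / 2
        + 2 / (1 + 4 * t ^ 2) := by
      refine (norm_sub_le _ _).trans ?_
      rw [norm_div, Complex.norm_two, norm_real, Real.norm_of_nonneg (by positivity)]
      gcongr
      exact norm_add_le _ _
    _ ≤ (2176 / t ^ 2 + 2176 / t ^ 2) / 2 + 1 / t ^ 2 := by gcongr
    _ = 2177 / t ^ 2 := by ring
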